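/- If a binary word v is even and contains at least one 1, and v is a factor of some word in R = (1000)^*(100)(10)^*(100)(100)^* such that v overlaps both the (1000)^* block and the (10)^* block (i.e., v contains the middle (100) as a factor straddling both blocks), then v has period structure 0^k 1 (0^2 1)^p 0^s with k+s = 2. -/

import Mathlib

/-- k-fold concatenation of a word -/
def pw (u : List Bool) (k : ℕ) : List Bool := (List.replicate k u).flatten

/-- a block of `s` zeros -/
def zeros (s : ℕ) : List Bool := List.replicate s false

/-- `w` is an abelian square: `w = s ++ t` with `t` a permutation of `s`
(equivalently over a binary alphabet: equal length and equal number of 1's). -/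
def IsAbelianSquare (w : List Bool) : Prop :=
  ∃ s t : List Bool, w = s ++ t ∧ s.length = t.length ∧ s.count true = t.count true

def w4 : List Bool := [true, false, false, false]
def w3 : List Bool := [true, false, false]
def w2 : List Bool := [true, false]

/-- the word z = (1000)^n (100) (10)^(n!+n) (100) (100)^(2(n!+n)) -/
def Z (n : ℕ) : List Bool :=
  pw w4 n ++ w3 ++ pw w2 (n.factorial + n) ++ w3 ++ pw w3 (2 * (n.factorial + n))

/-- membership in the regular language R = (1000)^* (100) (10)^* (100) (100)^* -/
def InR (w : List Bool) : Prop :=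
  ∃ a b c : ℕ, w = pw w4 a ++ w3 ++ pw w2 b ++ w3 ++ pw w3 c

/-- the gap sequence `[s_0, s_1, ..., s_k]` of `w = 0^{s_0} 1 0^{s_1} 1 ⋯ 1 0^{s_k}` -/
def gaps (w : List Bool) : List ℕ := (w.splitOn true).map List.length

/-- `alt w` = number of indices `1 ≤ i < k` with `s_i ≠ s_{i+1}` -/
def alt (w : List Bool) : ℕ :=
  ((gaps w).tail.zip (gaps w).tail.tail).countP (fun p => decide (p.1 ≠ p.2))

/-- writing `w = 0^{s_1} 1 0^{s_2} 1 ⋯ 0^{s_k} 1 0^{s_{k+1}}` (with k ones),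
the cyclic sequence `(s_1 + s_{k+1}, s_2, …, s_k)` -/
def cyclicGaps (w : List Bool) : List ℕ :=
  ((gaps w).headI + (gaps w).getLast!) :: (gaps w).tail.dropLast

/-- `w` (containing a 1) is uneven: the cyclic gap sequence has length > 1 and
two cyclically adjacent unequal entries (equivalently it is not constant) -/
def Uneven (w : List Bool) : Prop :=
  2 ≤ w.count true ∧ ¬ (cyclicGaps w).Chain' (· = ·)

/-- `w` (containing a 1) is even if it is not uneven -/
def EvenWord (w : List Bool) : Prop := true ∈ w ∧ ¬ Uneven w

/-!
An even word is `0^k 1 (0^g 1)^p 0^s` with `g = k + s`, so its 1s sit exactly at the positions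
`k + m (g + 1)`, `m ≤ p`. A factor of a word of `R` that reaches across the middle `100` contains
`1001`: two 1s at distance 3, hence `g + 1 ∣ 3`, and a 0 right after the first of them, which
rules out `g = 0`.
-/

lemma pw_succ (u : List Bool) (k : ℕ) : pw u (k + 1) = u ++ pw u k := by
  simp [pw, List.replicate_succ]

lemma length_zeros (n : ℕ) : (zeros n).length = n := List.length_replicate

lemma getElem?_zeros_ne_some_true (n j : ℕ) : (zeros n)[j]? ≠ some true := by
  simp only [zeros, List.getElem?_replicate]
  split <;> simp

lemma gaps_cons_true (w : List Bool) : gaps (true :: w) = 0 :: gaps w := by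
  simp [gaps, List.splitOn_cons_eq_if_modifyHead]

lemma gaps_cons_false (w : List Bool) : gaps (false :: w) = (gaps w).modifyHead (· + 1) := by
  obtain ⟨l, L, hw⟩ := List.exists_cons_of_ne_nil (List.splitOn_ne_nil true w)
  simp [gaps, List.splitOn_cons_eq_if_modifyHead, hw]

lemma exists_gaps_eq_and_eq_flatten (v : List Bool) :
    ∃ G s, gaps v = G ++ [s] ∧ v = (G.map fun t => zeros t ++ [true]).flatten ++ zeros s := by
  induction v with
  | nil => exact ⟨[], 0, rfl, rfl⟩
  | cons x w ih =>
    obtain ⟨G, s, hgaps, hw⟩ := ih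
    cases x with
    | true => exact ⟨0 :: G, s, by rw [gaps_cons_true, hgaps]; rfl, by rw [hw]; rfl⟩
    | false =>
      cases G with
      | nil => exact ⟨[], s + 1, by simp [gaps_cons_false, hgaps], by rw [hw]; rfl⟩
      | cons t G => exact ⟨(t + 1) :: G, s, by simp [gaps_cons_false, hgaps], by rw [hw]; rfl⟩

lemma count_true_flatten_zeros (G : List ℕ) (s : ℕ) :
    ((G.map fun t => zeros t ++ [true]).flatten ++ zeros s).count true = G.length := by
  induction G <;> simp_all [zeros, List.count_replicate]

theorem EvenWord.exists_eq {v : List Bool} (he : EvenWord v) :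
    ∃ k p s, v = zeros k ++ [true] ++ pw (zeros (k + s) ++ [true]) p ++ zeros s := by
  obtain ⟨G, s, hgaps, hv⟩ := exists_gaps_eq_and_eq_flatten v
  obtain _ | ⟨k, G⟩ := G
  · exact absurd he.1 (by simp [hv, zeros])
  have hcyc : cyclicGaps v = (k + s) :: G := by
    rw [cyclicGaps, hgaps, List.getLast!_eq_getLast?_getD, List.getLast?_concat]
    simp
  have hchain : (cyclicGaps v).IsChain (· = ·) := by
    by_contra h
    refine he.2 ⟨?_, h⟩
    rw [hv, count_true_flatten_zeros]
    cases G with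
    | nil => simp [hcyc] at h
    | cons => simp
  rw [hcyc, List.isChain_cons_eq_iff_eq_replicate] at hchain
  refine ⟨k, G.length, s, ?_⟩
  rw [hv, hchain]
  simp [pw, List.map_replicate]

lemma getElem?_cons_pw_eq_some_true_iff (g p j : ℕ) :
    (true :: pw (zeros g ++ [true]) p)[j]? = some true ↔ g + 1 ∣ j ∧ j ≤ p * (g + 1) := by
  induction p generalizing j with
  | zero => cases j <;> simp [pw]
  | succ p ih =>
    have hsplit : true :: pw (zeros g ++ [true]) (p + 1) =
        (true :: zeros g) ++ (true :: pw (zeros g ++ [true]) p) := by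
      simp [pw_succ]
    rw [hsplit, List.getElem?_append]
    simp only [List.length_cons, length_zeros]
    split_ifs with hj
    · cases j with
      | zero => simp
      | succ j =>
        have : ¬ g + 1 ∣ j + 1 := Nat.not_dvd_of_pos_of_lt (by omega) hj
        simp [zeros, List.getElem?_replicate, this]
    · obtain ⟨m, rfl⟩ := Nat.exists_eq_add_of_le (not_lt.1 hj)
      rw [Nat.add_sub_cancel_left, ih, Nat.dvd_add_self_left, add_one_mul]
      omega

lemma getElem?_zeros_append_pw_eq_some_true_iff (k g p s j : ℕ) :
    (zeros k ++ [true] ++ pw (zeros g ++ [true]) p ++ zeros s)[j]? = some true ↔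
      k ≤ j ∧ g + 1 ∣ j - k ∧ j - k ≤ p * (g + 1) := by
  have hform : zeros k ++ [true] ++ pw (zeros g ++ [true]) p ++ zeros s =
      zeros k ++ (true :: pw (zeros g ++ [true]) p) ++ zeros s := by simp
  rw [hform, List.getElem?_append, List.getElem?_append]
  have hlen : (true :: pw (zeros g ++ [true]) p).length = p * (g + 1) + 1 := by
    simp [pw, zeros]
  simp only [List.length_append, hlen, length_zeros]
  split_ifs with hjs hjk
  · exact ⟨fun h => absurd h (getElem?_zeros_ne_some_true _ _), fun h => by omega⟩
  · rw [getElem?_cons_pw_eq_some_true_iff]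
    omega
  · exact ⟨fun h => absurd h (getElem?_zeros_ne_some_true _ _), fun h => by omega⟩

lemma gap_eq_two_of_getElem? {v : List Bool} {k g p s i : ℕ}
    (hv : v = zeros k ++ [true] ++ pw (zeros g ++ [true]) p ++ zeros s)
    (h0 : v[i]? = some true) (h1 : v[i + 1]? = some false) (h3 : v[i + 3]? = some true) :
    g = 2 := by
  rw [hv, getElem?_zeros_append_pw_eq_some_true_iff] at h0 h3
  have hdvd : g + 1 ∣ 3 := by
    simpa [show i + 3 - k - (i - k) = 3 by omega] using Nat.dvd_sub h3.2.1 h0.2.1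
  rcases (Nat.dvd_prime Nat.prime_three).1 hdvd with hg | hg
  · obtain rfl : g = 0 := by omega
    have : v[i + 1]? = some true := by
      rw [hv, getElem?_zeros_append_pw_eq_some_true_iff]
      exact ⟨by omega, one_dvd _, by omega⟩
    simp [this] at h1
  · omega

lemma getElem?_of_append_eq_append {α : Type*} {u v y x z : List α} (h : u ++ v ++ y = x ++ z)
    (hu : u.length ≤ x.length) {j : ℕ} (hj : x.length + j < u.length + v.length) :
    v[x.length - u.length + j]? = z[j]? := by
  have := congrArg (·[x.length + j]?) h
  simp only [List.append_assoc] at this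
  rw [List.getElem?_append_right (by omega), List.getElem?_append_left (by omega),
    List.getElem?_append_right (by omega)] at this
  rwa [Nat.add_sub_cancel_left, show x.length + j - u.length = x.length - u.length + j by omega]
    at this

theorem stmt15_general (v : List Bool) (he : EvenWord v)
    (a b c : ℕ) (u y : List Bool)
    (hfac : u ++ v ++ y = pw w4 a ++ w3 ++ pw w2 b ++ w3 ++ pw w3 c)
    (hleft : u.length < 4 * a)
    (hright : 4 * a + 3 < u.length + v.length) :
    ∃ k p s : ℕ, k + s = 2 ∧
      v = zeros k ++ [true] ++ pw (zeros 2 ++ [true]) p ++ zeros s := by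
  obtain ⟨k, p, s, hv⟩ := he.exists_eq
  have hpw : (pw w4 a).length = 4 * a := by simp [pw, w4, mul_comm]
  have hmid (j : ℕ) (hj : j ≤ 3) :
      v[4 * a - u.length + j]? = (w3 ++ pw w2 b ++ w3 ++ pw w3 c)[j]? := by
    rw [← hpw]
    exact getElem?_of_append_eq_append (by simpa only [List.append_assoc] using hfac)
      (by omega) (by omega)
  have hg := gap_eq_two_of_getElem? hv (by simpa [w3] using hmid 0 (by omega))
    (by simpa [w3] using hmid 1 (by omega))
    -- `(10)^b 100` begins with a 1 whether or not `b = 0`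
    (by cases b <;> simpa [w2, w3, pw, List.replicate_succ] using hmid 3 le_rfl)
  exact ⟨k, p, s, hg, hg ▸ hv⟩

theorem stmt15 (v : List Bool) (h1 : true ∈ v) (he : EvenWord v)
    (a b c : ℕ) (u y : List Bool)
    (hfac : u ++ v ++ y = pw w4 a ++ w3 ++ pw w2 b ++ w3 ++ pw w3 c)
    (hleft : u.length < 4 * a)
    (hright : 4 * a + 3 < u.length + v.length) :
    ∃ k p s : ℕ, k + s = 2 ∧
      v = zeros k ++ [true] ++ pw (zeros 2 ++ [true]) p ++ zeros s :=
  stmt15_general v he a b c u y hfac hleft hright
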